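/- Let C > 0 and ρ ∈ (C^(−3/2), ∞), and consider the surface of revolution with profile defined by (ρ')² = Cρ^(2/3) − 1 in ℝ³. Then its Gauss curvature is K = −1/(3Cρ^(8/3)) and its mean curvature is f = 2/(3√C·ρ^(4/3)), and these satisfy K = −3f²/4. -/

import Mathlib

/-- Mean curvature f = (1/√(1+ρ'²))(1/ρ − ρ''/(1+ρ'²)) of the surface of revolution
X(u,v) = (ρ(u)cos v, ρ(u)sin v, u). -/
noncomputable def meanCurvRev (ρ : ℝ → ℝ) (u : ℝ) : ℝ :=
  (1 / Real.sqrt (1 + (deriv ρ u) ^ 2)) *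
    (1 / ρ u - deriv (deriv ρ) u / (1 + (deriv ρ u) ^ 2))

/-- Gauss curvature K = det A = (−ρ''/(1+ρ'²)^(3/2))·(1/(ρ√(1+ρ'²))) of the surface of
revolution X(u,v) = (ρ(u)cos v, ρ(u)sin v, u). -/
noncomputable def gaussCurvRev (ρ : ℝ → ℝ) (u : ℝ) : ℝ :=
  (-(deriv (deriv ρ) u) / (1 + (deriv ρ u) ^ 2) ^ ((3 : ℝ) / 2)) *
    (1 / (ρ u * Real.sqrt (1 + (deriv ρ u) ^ 2)))

/-- For the biconservative surface of revolution with profile satisfying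
(ρ')² = Cρ^(2/3) − 1, C > 0, ρ > C^(−3/2): K = −1/(3Cρ^(8/3)), f = 2/(3√C·ρ^(4/3)),
and K = −3f²/4. -/
theorem stmt_16 (a b C : ℝ) (hC : 0 < C) (ρ : ℝ → ℝ)
    (hsmooth : ContDiffOn ℝ (⊤ : ℕ∞) ρ (Set.Ioo a b))
    (hρ : ∀ u ∈ Set.Ioo a b, C ^ (-(3 : ℝ) / 2) < ρ u)
    (hfi : ∀ u ∈ Set.Ioo a b, (deriv ρ u) ^ 2 = C * (ρ u) ^ ((2 : ℝ) / 3) - 1) :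
    ∀ u ∈ Set.Ioo a b,
      gaussCurvRev ρ u = -1 / (3 * C * (ρ u) ^ ((8 : ℝ) / 3)) ∧
      meanCurvRev ρ u = 2 / (3 * Real.sqrt C * (ρ u) ^ ((4 : ℝ) / 3)) ∧
      gaussCurvRev ρ u = -(3 / 4) * (meanCurvRev ρ u) ^ 2 := by
  intro u hu
  have hmem : Set.Ioo a b ∈ nhds u := isOpen_Ioo.mem_nhds hu
  have hP : C ^ (-(3 : ℝ) / 2) < ρ u := hρ u hu
  have hPpos : 0 < ρ u := lt_trans (Real.rpow_pos_of_pos hC _) hP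
  -- differentiability
  have hρd : ContDiffOn ℝ (⊤ : ℕ∞) (deriv ρ) (Set.Ioo a b) :=
    hsmooth.deriv_of_isOpen isOpen_Ioo (mod_cast le_top)
  have hd1 : DifferentiableAt ℝ ρ u :=
    (hsmooth.contDiffAt hmem).differentiableAt (by simp)
  have hd2 : DifferentiableAt ℝ (deriv ρ) u :=
    (hρd.contDiffAt hmem).differentiableAt (by simp)
  -- C * ρ^(2/3) > 1
  have hgt1 : 1 < C * (ρ u) ^ ((2 : ℝ) / 3) := by
    have h1 : (C ^ (-(3 : ℝ) / 2)) ^ ((2 : ℝ) / 3) < (ρ u) ^ ((2 : ℝ) / 3) :=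
      Real.rpow_lt_rpow (Real.rpow_pos_of_pos hC _).le hP (by norm_num)
    have h2 : (C ^ (-(3 : ℝ) / 2)) ^ ((2 : ℝ) / 3) = C⁻¹ := by
      rw [← Real.rpow_mul hC.le, show (-(3:ℝ)/2 * (2/3)) = -1 by norm_num,
        Real.rpow_neg_one]
    rw [h2] at h1
    calc (1:ℝ) = C * C⁻¹ := by field_simp
    _ < C * (ρ u) ^ ((2 : ℝ) / 3) := by
        exact (mul_lt_mul_iff_right₀ hC).mpr h1
  -- ρ' ≠ 0
  have hfi' := hfi u hu
  have hd1sq : 0 < (deriv ρ u) ^ 2 := by rw [hfi']; linarith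
  have hd1ne : deriv ρ u ≠ 0 := by
    intro h; rw [h] at hd1sq; simp at hd1sq
  -- second derivative
  have hev : (fun x => (deriv ρ x) ^ 2) =ᶠ[nhds u]
      (fun x => C * (ρ x) ^ ((2 : ℝ) / 3) - 1) :=
    Filter.eventuallyEq_of_mem hmem (fun x hx => hfi x hx)
  have hL : HasDerivAt (fun x => (deriv ρ x) ^ 2)
      (2 * deriv ρ u * deriv (deriv ρ) u) u := by
    have := (hd2.hasDerivAt.pow 2)
    exact (by simpa using this : HasDerivAt (deriv ρ ^ 2) (2 * deriv ρ u * deriv (deriv ρ) u) u)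
  have hR : HasDerivAt (fun x => C * (ρ x) ^ ((2 : ℝ) / 3) - 1)
      (C * (deriv ρ u * ((2 : ℝ) / 3) * (ρ u) ^ ((2 : ℝ) / 3 - 1))) u :=
    ((hd1.hasDerivAt.rpow_const (Or.inl hPpos.ne')).const_mul C).sub_const 1
  have hderiv_eq : 2 * deriv ρ u * deriv (deriv ρ) u
      = C * (deriv ρ u * ((2 : ℝ) / 3) * (ρ u) ^ ((2 : ℝ) / 3 - 1)) := by
    have h1 := hL.deriv
    have h2 := hR.deriv
    rw [← h1, ← h2]
    exact Filter.EventuallyEq.deriv_eq hev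
  have hρ'' : deriv (deriv ρ) u = C * (ρ u) ^ (-(1 : ℝ) / 3) / 3 := by
    have h23 : (2 : ℝ) / 3 - 1 = -(1 : ℝ) / 3 := by norm_num
    rw [h23] at hderiv_eq
    have key : (2 * deriv (deriv ρ) u) * deriv ρ u
        = (C * (2 / 3) * (ρ u) ^ (-(1 : ℝ) / 3)) * deriv ρ u := by
      linear_combination hderiv_eq
    have := mul_right_cancel₀ hd1ne key
    linarith
  -- set r = ρ u ^ (1/3)
  set r : ℝ := (ρ u) ^ ((1 : ℝ) / 3) with hr_def
  have hrpos : 0 < r := Real.rpow_pos_of_pos hPpos _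
  have hpow : ∀ n : ℕ, (ρ u) ^ ((n : ℝ) / 3) = r ^ n := by
    intro n
    rw [hr_def, ← Real.rpow_natCast ((ρ u) ^ ((1:ℝ)/3)) n, ← Real.rpow_mul hPpos.le]
    ring_nf
  have hr3 : r ^ 3 = ρ u := by
    have := hpow 3
    simpa using this.symm
  have hr2 : (ρ u) ^ ((2 : ℝ) / 3) = r ^ 2 := by simpa using hpow 2
  have hr8 : (ρ u) ^ ((8 : ℝ) / 3) = r ^ 8 := by simpa using hpow 8
  have hr4 : (ρ u) ^ ((4 : ℝ) / 3) = r ^ 4 := by simpa using hpow 4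
  have hrm1 : (ρ u) ^ (-(1 : ℝ) / 3) = r⁻¹ := by
    rw [show (-(1:ℝ)/3) = (1:ℝ)/3 * (-1) by norm_num, Real.rpow_mul hPpos.le,
      Real.rpow_neg_one]
  -- the metric factor
  have hS : 1 + (deriv ρ u) ^ 2 = C * r ^ 2 := by rw [hfi', hr2]; ring
  have hSpos : 0 < C * r ^ 2 := by positivity
  set s : ℝ := Real.sqrt C with hs_def
  have hspos : 0 < s := Real.sqrt_pos.mpr hC
  have hs2 : s ^ 2 = C := Real.sq_sqrt hC.le
  have hsqrtS : Real.sqrt (C * r ^ 2) = s * r := by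
    rw [Real.sqrt_mul hC.le, Real.sqrt_sq hrpos.le]
  have hS32 : (C * r ^ 2) ^ ((3 : ℝ) / 2) = (C * r ^ 2) * (s * r) := by
    rw [show (3:ℝ)/2 = 1 + 1/2 by norm_num, Real.rpow_add hSpos, Real.rpow_one,
      ← Real.sqrt_eq_rpow, hsqrtS]
  -- compute
  have hK : gaussCurvRev ρ u = -1 / (3 * C * (ρ u) ^ ((8 : ℝ) / 3)) := by
    rw [gaussCurvRev, hρ'', hrm1, hS, hS32, hsqrtS, hr8, ← hr3, ← hs2]
    have hrne := hrpos.ne'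
    have hsne := hspos.ne'
    field_simp
  have hf : meanCurvRev ρ u = 2 / (3 * Real.sqrt C * (ρ u) ^ ((4 : ℝ) / 3)) := by
    rw [meanCurvRev, hρ'', hrm1, hS, hsqrtS, hr4, ← hr3, ← hs_def, ← hs2]
    have hrne := hrpos.ne'
    have hsne := hspos.ne'
    field_simp
    ring
  refine ⟨hK, hf, ?_⟩
  rw [hK, hf, hr8, hr4, ← hs_def, ← hs2]
  have hrne := hrpos.ne'
  have hsne := hspos.ne'
  field_simp
  ring
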